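/- arXiv:2108.02683 — 5 statements merged into one kernel-verified Lean document; each statement's English description precedes it below -/
import Mathlib

section
/- Let Λ ∈ ℝ and let r ∈ g_Λ ∧ g_Λ be a skew-symmetric element of g_Λ ⊗ g_Λ. If δ_r(X) = X·r ∈ h ∧ h for every X in the Lorentz subalgebra h = span{K_1,K_2,K_3,J_1,J_2,J_3}, then r ∈ h ∧ h; that is, all components of r of the forms K_a∧P_μ, J_a∧P_μ and P_μ∧P_ν vanish, and r is a linear combination of the elements K_a∧K_b, K_a∧J_b and J_a∧J_b only. -/
/-!
Only the boosts `K_a` are needed. As `ad K_a` preserves both the translations `p = span{P_μ}`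
and the Lorentz subalgebra `h`, the translation rows of `δ_r(K_a)` see only the `p ∧ p` and
`p ⊗ h` parts of `r`. On `p`, `ad K_a` swaps `P_0` and `P_a` and kills the other `P_b`, which
forces the `p ∧ p` part to vanish. On `h` it acts by the cross product with the `a`-th axis,
exchanging `K` and `J`: testing the `P_b`-row (`b ≠ 0`) with the two boosts `K_a`, `a ≠ b`,
which kill `P_b`, shows that this row vanishes, and the `P_0`-row follows because `ad K_a`
moves it onto the already vanishing `P_a`-row.
-/

namespace NCST

noncomputable section

/-- The underlying 10-dimensional vector space of `g_Λ`, with basis indices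
`0,1,2,3 ↦ P_0,P_1,P_2,P_3`, `4,5,6 ↦ K_1,K_2,K_3`, `7,8,9 ↦ J_1,J_2,J_3`. -/
abbrev V : Type := Fin 10 → ℝ

/-- The `i`-th basis vector. -/
def e (i : Fin 10) : V := Pi.single i 1

/-- The Levi-Civita symbol on `{1,2,3}` (indices shifted to `Fin 3`), `ε_{123} = 1`. -/
def eps (a b c : Fin 3) : ℝ :=
  if (a = 0 ∧ b = 1 ∧ c = 2) ∨ (a = 1 ∧ b = 2 ∧ c = 0) ∨ (a = 2 ∧ b = 0 ∧ c = 1) then 1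
  else if (a = 2 ∧ b = 1 ∧ c = 0) ∨ (a = 1 ∧ b = 0 ∧ c = 2) ∨ (a = 0 ∧ b = 2 ∧ c = 1) then -1
  else 0

/-- Translation generators `P_μ`, `μ = 0,1,2,3`. -/
def Pv (μ : Fin 4) : V := e ⟨μ.1, by have := μ.isLt; omega⟩
/-- Boost generators `K_a`, `a = 1,2,3` (index `a+1` in `Fin 3`-terms). -/
def Kv (a : Fin 3) : V := e ⟨a.1 + 4, by have := a.isLt; omega⟩
/-- Rotation generators `J_a`, `a = 1,2,3`. -/
def Jv (a : Fin 3) : V := e ⟨a.1 + 7, by have := a.isLt; omega⟩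

/-- Labels for the kinematical basis generators. -/
inductive Gen : Type
  | P : Fin 4 → Gen
  | K : Fin 3 → Gen
  | J : Fin 3 → Gen

/-- `[K_a, P_μ]`: equals `P_a` if `μ = 0` and `δ_{ab} P_0` if `μ = b ∈ {1,2,3}`. -/
def KPbra (a : Fin 3) (μ : Fin 4) : V :=
  if μ.1 = 0 then Pv ⟨a.1 + 1, by have := a.isLt; omega⟩
  else if μ.1 = a.1 + 1 then Pv 0 else 0

/-- `[J_a, P_μ]`: equals `0` if `μ = 0` and `ε_{abc} P_c` if `μ = b ∈ {1,2,3}`. -/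
def JPbra (a : Fin 3) (μ : Fin 4) : V :=
  if h : μ.1 = 0 then 0
  else ∑ c : Fin 3, eps a ⟨μ.1 - 1, by have := μ.isLt; omega⟩ c •
    Pv ⟨c.1 + 1, by have := c.isLt; omega⟩

/-- `[P_μ, P_ν]`: `[P_0,P_a] = -Λ K_a`, `[P_a,P_b] = Λ ε_{abc} J_c`. -/
def PPbra (Λ : ℝ) (μ ν : Fin 4) : V :=
  if _hμ : μ.1 = 0 then
    (if _hν : ν.1 = 0 then 0 else (-Λ) • Kv ⟨ν.1 - 1, by have := ν.isLt; omega⟩)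
  else if _hν : ν.1 = 0 then Λ • Kv ⟨μ.1 - 1, by have := μ.isLt; omega⟩
  else Λ • ∑ c : Fin 3, eps ⟨μ.1 - 1, by have := μ.isLt; omega⟩
    ⟨ν.1 - 1, by have := ν.isLt; omega⟩ c • Jv c

/-- `[K_a, K_b] = -ε_{abc} J_c`. -/
def KKbra (a b : Fin 3) : V := -∑ c : Fin 3, eps a b c • Jv c
/-- `[J_a, K_b] = ε_{abc} K_c`. -/
def JKbra (a b : Fin 3) : V := ∑ c : Fin 3, eps a b c • Kv c
/-- `[J_a, J_b] = ε_{abc} J_c`. -/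
def JJbra (a b : Fin 3) : V := ∑ c : Fin 3, eps a b c • Jv c

/-- The bracket of two basis generators of `g_Λ`, as in eq. (1) of the paper. -/
def genBra (Λ : ℝ) : Gen → Gen → V
  | .P μ, .P ν => PPbra Λ μ ν
  | .P μ, .K a => -KPbra a μ
  | .P μ, .J a => -JPbra a μ
  | .K a, .P μ => KPbra a μ
  | .K a, .K b => KKbra a b
  | .K a, .J b => -JKbra b a
  | .J a, .P μ => JPbra a μ
  | .J a, .K b => JKbra a b
  | .J a, .J b => JJbra a b

/-- Decoding of a `Fin 10` index into the corresponding generator label. -/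
def idxGen (i : Fin 10) : Gen :=
  if h : i.1 < 4 then .P ⟨i.1, h⟩
  else if h2 : i.1 < 7 then .K ⟨i.1 - 4, by omega⟩
  else .J ⟨i.1 - 7, by have := i.isLt; omega⟩

/-- The bracket of `g_Λ`, extended bilinearly from the structure constants. -/
def bra (Λ : ℝ) (x y : V) : V :=
  ∑ i : Fin 10, ∑ j : Fin 10, (x i * y j) • genBra Λ (idxGen i) (idxGen j)

/-- Coefficients of elements of `g_Λ ⊗ g_Λ` in the basis `e_i ⊗ e_j`. -/
abbrev T2 : Type := Fin 10 → Fin 10 → ℝ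
/-- Coefficients of elements of `g_Λ ⊗ g_Λ ⊗ g_Λ`. -/
abbrev T3 : Type := Fin 10 → Fin 10 → Fin 10 → ℝ

/-- The diagonal adjoint action `X·(a⊗b) = [X,a]⊗b + a⊗[X,b]` on `g_Λ ⊗ g_Λ`,
in coordinates; `adT Λ X r` is the cocommutator `δ_r(X)`. -/
def adT (Λ : ℝ) (X : V) (r : T2) : T2 :=
  fun k l => (∑ i : Fin 10, r i l * bra Λ X (e i) k) +
    ∑ j : Fin 10, r k j * bra Λ X (e j) l

/-- `x ∧ y := x ⊗ y - y ⊗ x`, in coordinates. -/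
def wedge (x y : V) : T2 := fun i j => x i * y j - x j * y i

/-- The wedge `e_i ∧ e_j` of two basis vectors. -/
def wEl (i j : Fin 10) : T2 := wedge (e i) (e j)

/-- The Schouten bracket `[[r,r]]` of `r ∈ g_Λ ⊗ g_Λ`, in coordinates:
`[[r,r]] = [r_{12},r_{13}] + [r_{12},r_{23}] + [r_{13},r_{23}]`, i.e. for
`r = Σ aᵢ⊗bᵢ`, `[[r,r]] = Σᵢⱼ ([aᵢ,aⱼ]⊗bᵢ⊗bⱼ + aᵢ⊗[bᵢ,aⱼ]⊗bⱼ + aᵢ⊗aⱼ⊗[bᵢ,bⱼ])`. -/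
def schouten (Λ : ℝ) (r : T2) : T3 :=
  fun p q s =>
    ∑ i : Fin 10, ∑ j : Fin 10, ∑ k : Fin 10, ∑ l : Fin 10, r i j * r k l *
      (bra Λ (e i) (e k) p * (if j = q then (1:ℝ) else 0) * (if l = s then (1:ℝ) else 0)
      + (if i = p then (1:ℝ) else 0) * bra Λ (e j) (e k) q * (if l = s then (1:ℝ) else 0)
      + (if i = p then (1:ℝ) else 0) * (if k = q then (1:ℝ) else 0) * bra Λ (e j) (e l) s)

/-- The diagonal adjoint action of `X ∈ g_Λ` on `g_Λ ⊗ g_Λ ⊗ g_Λ`, in coordinates. -/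
def adT3 (Λ : ℝ) (X : V) (T : T3) : T3 :=
  fun p q s => (∑ i : Fin 10, T i q s * bra Λ X (e i) p)
    + (∑ j : Fin 10, T p j s * bra Λ X (e j) q)
    + ∑ k : Fin 10, T p q k * bra Λ X (e k) s

def idxP (b : Fin 3) : Fin 10 := ⟨b.1 + 1, by omega⟩
def idxK (b : Fin 3) : Fin 10 := ⟨b.1 + 4, by omega⟩
def idxJ (b : Fin 3) : Fin 10 := ⟨b.1 + 7, by omega⟩

lemma idxGen_idxP (b : Fin 3) : idxGen (idxP b) = .P b.succ := by fin_cases b <;> rfl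
lemma idxGen_idxK (b : Fin 3) : idxGen (idxK b) = .K b := by fin_cases b <;> rfl
lemma idxGen_idxJ (b : Fin 3) : idxGen (idxJ b) = .J b := by fin_cases b <;> rfl

lemma sum_fin_ten_by_blocks (f : Fin 10 → ℝ) :
    ∑ j, f j = f 0 + ∑ b, f (idxP b) + ∑ b, f (idxK b) + ∑ b, f (idxJ b) := by
  simp only [Fin.sum_univ_succ, Fin.sum_univ_zero, add_zero, add_assoc]
  rfl

lemma bra_apply_eq_sum (Λ : ℝ) (X y : V) :
    bra Λ X y = ∑ j : Fin 10, y j • bra Λ X (e j) := by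
  simp only [bra, Finset.smul_sum, smul_smul]
  rw [Finset.sum_comm]
  refine Finset.sum_congr rfl fun j _ => Finset.sum_congr rfl fun i _ => ?_
  rw [Finset.sum_eq_single j]
  · simp [e, mul_comm]
  · intro k _ hk; simp [e, hk]
  · simp

lemma adT_apply (Λ : ℝ) (X : V) (r : T2) (k l : Fin 10) :
    adT Λ X r k l = bra Λ X (fun i => r i l) k + bra Λ X (r k) l := by
  rw [adT, bra_apply_eq_sum Λ X (fun i => r i l), bra_apply_eq_sum Λ X (r k)]
  simp only [Finset.sum_apply, Pi.smul_apply, smul_eq_mul]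

lemma bra_Kv_apply (Λ : ℝ) (a : Fin 3) (y : V) (k : Fin 10) :
    bra Λ (Kv a) y k = ∑ j : Fin 10, y j * genBra Λ (.K a) (idxGen j) k := by
  rw [show Kv a = e (idxK a) from rfl]
  simp only [bra, Finset.sum_apply, Pi.smul_apply, smul_eq_mul]
  rw [Finset.sum_eq_single (idxK a)]
  · simp [e, idxGen_idxK]
  · intro i _ hi; simp [e, hi]
  · simp

lemma bra_Kv_eq (Λ : ℝ) (a : Fin 3) (y : V) :
    bra Λ (Kv a) y = y 0 • Pv a.succ + y (idxP a) • Pv 0 +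
      ∑ b, y (idxK b) • KKbra a b - ∑ b, y (idxJ b) • JKbra b a := by
  have h0 : idxGen 0 = .P 0 := rfl
  have hKP0 : KPbra a 0 = Pv a.succ := rfl
  have hKP : ∀ b : Fin 3, KPbra a b.succ = if b = a then Pv 0 else 0 := by
    intro b; fin_cases a <;> fin_cases b <;> rfl
  ext k
  rw [bra_Kv_apply, sum_fin_ten_by_blocks]
  simp [h0, idxGen_idxP, idxGen_idxK, idxGen_idxJ, hKP0, hKP, genBra, Finset.sum_apply,
    sub_eq_add_neg, ite_apply]

section BoostComponents

variable (Λ : ℝ) (a : Fin 3) (y : V)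

lemma bra_Kv_apply_zero : bra Λ (Kv a) y 0 = y (idxP a) := by
  rw [bra_Kv_eq]
  fin_cases a <;> simp [Fin.sum_univ_succ, KKbra, JKbra, Pv, Kv, Jv, e, idxP]

lemma bra_Kv_apply_idxP_self : bra Λ (Kv a) y (idxP a) = y 0 := by
  rw [bra_Kv_eq]
  fin_cases a <;> simp [Fin.sum_univ_succ, KKbra, JKbra, Pv, Kv, Jv, e, idxP]

lemma bra_Kv_apply_idxP_of_ne {b : Fin 3} (hb : b ≠ a) : bra Λ (Kv a) y (idxP b) = 0 := by
  rw [bra_Kv_eq]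
  fin_cases a <;> fin_cases b <;> simp_all [Fin.sum_univ_succ, KKbra, JKbra, Pv, Kv, Jv, e, idxP]

lemma bra_Kv_apply_idxK (c : Fin 3) :
    bra Λ (Kv a) y (idxK c) = ∑ b, eps a b c * y (idxJ b) := by
  rw [bra_Kv_eq]
  fin_cases a <;> fin_cases c <;> simp [Fin.sum_univ_succ, KKbra, JKbra, Pv, Kv, Jv, e, idxK, eps]

lemma bra_Kv_apply_idxJ (c : Fin 3) :
    bra Λ (Kv a) y (idxJ c) = -∑ b, eps a b c * y (idxK b) := by
  rw [bra_Kv_eq]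
  fin_cases a <;> fin_cases c <;> simp [Fin.sum_univ_succ, KKbra, JKbra, Pv, Kv, Jv, e, idxJ, eps]

end BoostComponents

/-- `∑ e, eps a e c * x e` is the `c`-th coordinate of the cross product of the `a`-th axis
with `x`; those with the two axes other than `b` already determine `x`. -/
lemma eq_zero_of_forall_ne_sum_eps_mul_eq_zero (b : Fin 3) {x : Fin 3 → ℝ}
    (hx : ∀ a, a ≠ b → ∀ c, ∑ e, eps a e c * x e = 0) : x = 0 := by
  ext d
  fin_cases b <;> fin_cases d <;> simp_all [Fin.forall_fin_succ, Fin.sum_univ_succ, eps]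

lemma Kv_apply_of_lt_four (a : Fin 3) {i : Fin 10} (hi : i.1 < 4) : Kv a i = 0 := by
  simp only [Kv, e, Pi.single_apply, Fin.ext_iff, ite_eq_right_iff, one_ne_zero, imp_false]
  omega

lemma eq_zero_or_idxP_or_idxK_or_idxJ (i : Fin 10) :
    i = 0 ∨ (∃ b, i = idxP b) ∨ (∃ b, i = idxK b) ∨ ∃ b, i = idxJ b := by
  fin_cases i <;> decide

lemma idxP_lt_four (b : Fin 3) : (idxP b).1 < 4 := by
  simp only [idxP]; omega

def TranslationRowsBoostInvariant (Λ : ℝ) (r : T2) : Prop :=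
  ∀ a k l, k.1 < 4 → adT Λ (Kv a) r k l = 0

namespace TranslationRowsBoostInvariant

variable {Λ : ℝ} {r : T2}

lemma apply_idxP_zero (hK : TranslationRowsBoostInvariant Λ r) (b : Fin 3) :
    r (idxP b) 0 = 0 := by
  have hne : b ≠ b + 1 := by fin_cases b <;> decide
  have := hK (b + 1) (idxP b) (idxP (b + 1)) (idxP_lt_four b)
  rwa [adT_apply, bra_Kv_apply_idxP_of_ne _ _ _ hne, bra_Kv_apply_idxP_self, zero_add] at this

lemma apply_idxP_idxP (hK : TranslationRowsBoostInvariant Λ r) (hskew : ∀ i j, r j i = -r i j)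
    (a b : Fin 3) : r (idxP a) (idxP b) = 0 := by
  rcases eq_or_ne b a with rfl | hne
  · linarith [hskew (idxP b) (idxP b)]
  · have := hK a 0 (idxP b) (by decide)
    rwa [adT_apply, bra_Kv_apply_zero, bra_Kv_apply_idxP_of_ne _ _ _ hne, add_zero] at this

lemma apply_idxP_idxJ (hK : TranslationRowsBoostInvariant Λ r) (b d : Fin 3) :
    r (idxP b) (idxJ d) = 0 := by
  suffices (fun e => r (idxP b) (idxJ e)) = 0 from congrFun this d
  refine eq_zero_of_forall_ne_sum_eps_mul_eq_zero b fun a hne c => ?_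
  have := hK a (idxP b) (idxK c) (idxP_lt_four b)
  rwa [adT_apply, bra_Kv_apply_idxP_of_ne _ _ _ hne.symm, bra_Kv_apply_idxK, zero_add] at this

lemma apply_idxP_idxK (hK : TranslationRowsBoostInvariant Λ r) (b d : Fin 3) :
    r (idxP b) (idxK d) = 0 := by
  suffices (fun e => r (idxP b) (idxK e)) = 0 from congrFun this d
  refine eq_zero_of_forall_ne_sum_eps_mul_eq_zero b fun a hne c => ?_
  have := hK a (idxP b) (idxJ c) (idxP_lt_four b)
  rwa [adT_apply, bra_Kv_apply_idxP_of_ne _ _ _ hne.symm, bra_Kv_apply_idxJ, zero_add,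
    neg_eq_zero] at this

lemma apply_zero_idxJ (hK : TranslationRowsBoostInvariant Λ r) (d : Fin 3) :
    r 0 (idxJ d) = 0 := by
  suffices (fun e => r 0 (idxJ e)) = 0 from congrFun this d
  refine eq_zero_of_forall_ne_sum_eps_mul_eq_zero 0 fun a _ c => ?_
  have := hK a 0 (idxK c) (by decide)
  rwa [adT_apply, bra_Kv_apply_zero, bra_Kv_apply_idxK, hK.apply_idxP_idxK, zero_add] at this

lemma apply_zero_idxK (hK : TranslationRowsBoostInvariant Λ r) (d : Fin 3) :
    r 0 (idxK d) = 0 := by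
  suffices (fun e => r 0 (idxK e)) = 0 from congrFun this d
  refine eq_zero_of_forall_ne_sum_eps_mul_eq_zero 0 fun a _ c => ?_
  have := hK a 0 (idxJ c) (by decide)
  rwa [adT_apply, bra_Kv_apply_zero, bra_Kv_apply_idxJ, hK.apply_idxP_idxJ, zero_add,
    neg_eq_zero] at this

lemma apply_eq_zero_of_lt_four (hK : TranslationRowsBoostInvariant Λ r)
    (hskew : ∀ i j, r j i = -r i j) {i : Fin 10} (hi : i.1 < 4) (j : Fin 10) : r i j = 0 := by
  have hzero : r 0 j = 0 := by
    rcases eq_zero_or_idxP_or_idxK_or_idxJ j with rfl | ⟨b, rfl⟩ | ⟨b, rfl⟩ | ⟨b, rfl⟩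
    · linarith [hskew 0 0]
    · rw [hskew, hK.apply_idxP_zero, neg_zero]
    · exact hK.apply_zero_idxK b
    · exact hK.apply_zero_idxJ b
  rcases eq_zero_or_idxP_or_idxK_or_idxJ i with rfl | ⟨a, rfl⟩ | ⟨a, rfl⟩ | ⟨a, rfl⟩
  · exact hzero
  · rcases eq_zero_or_idxP_or_idxK_or_idxJ j with rfl | ⟨b, rfl⟩ | ⟨b, rfl⟩ | ⟨b, rfl⟩
    · exact hK.apply_idxP_zero a
    · exact hK.apply_idxP_idxP hskew a b
    · exact hK.apply_idxP_idxK a b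
    · exact hK.apply_idxP_idxJ a b
  · simp only [idxK] at hi; omega
  · simp only [idxJ] at hi; omega

end TranslationRowsBoostInvariant

/-- If `r ∈ g_Λ ∧ g_Λ` satisfies `δ_r(X) = X·r ∈ h ∧ h` for every
`X` in the Lorentz subalgebra `h = span{K_1,K_2,K_3,J_1,J_2,J_3}` (coordinates
`4,…,9`), then `r ∈ h ∧ h`: all components of `r` involving a translation index
(`K_a∧P_μ`, `J_a∧P_μ`, `P_μ∧P_ν`) vanish. -/
theorem lorentz_subbialgebra_implies_r_in_hh (Λ : ℝ) (r : T2)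
    (hskew : ∀ i j : Fin 10, r j i = -r i j)
    (h : ∀ X : V, (∀ i : Fin 10, i.1 < 4 → X i = 0) →
      ∀ k l : Fin 10, (k.1 < 4 ∨ l.1 < 4) → adT Λ X r k l = 0) :
    ∀ i j : Fin 10, (i.1 < 4 ∨ j.1 < 4) → r i j = 0 := by
  have hK : TranslationRowsBoostInvariant Λ r := fun a k l hk =>
    h (Kv a) (fun _ => Kv_apply_of_lt_four a) k l (Or.inl hk)
  rintro i j (hi | hj)
  · exact hK.apply_eq_zero_of_lt_four hskew hi j
  · rw [hskew, hK.apply_eq_zero_of_lt_four hskew hj i, neg_zero]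

end
end NCST
end

section
/- For every Λ ∈ ℝ and all real parameters z, z', each of the three elements r_I = z(K_1∧K_2 + K_1∧J_3 − K_3∧J_1 − J_1∧J_2) − z'(K_2∧K_3 − K_2∧J_2 − K_3∧J_3 + J_2∧J_3), r_II = z K_1∧J_1, and r_III = z(K_1∧K_2 + K_1∧J_3) of g_Λ ∧ g_Λ satisfies the classical Yang–Baxter equation, i.e. [[r,r]] = 0 in g_Λ⊗g_Λ⊗g_Λ. -/
/-!
All three `r`-matrices lie in `Λ²𝔥` for the subalgebra `𝔥 = span {K₁, J₁, N₁, N₂}` of the Lorentz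
algebra, where `N₁ = K₂ + J₃` and `N₂ = K₃ - J₂` are null rotations (`𝔥` stabilises the null line
`ℝ (P₀ - P₁)`): `r_I = z (K₁ ∧ N₁ + J₁ ∧ N₂) - z' N₁ ∧ N₂`, `r_II = z K₁ ∧ J₁`, `r_III = z K₁ ∧ N₁`.

The Schouten bracket is the diagonal of a bilinear form whose value on `a ∧ b`, `c ∧ d` only
involves the brackets `[a,c], [a,d], [b,c], [b,d]`, each inserted into the two remaining factors.
The brackets of `𝔥` involve no translations, hence no `Λ`: `[K₁,J₁] = [N₁,N₂] = 0`, `ad K₁ = -1`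
on `span {N₁, N₂}`, and `ad J₁` rotates `N₁ ↦ N₂ ↦ -N₁`. With these the resulting trilinear
expressions cancel identically.
-/

namespace NCST

noncomputable section

/-- `r_I = z(K_1∧K_2 + K_1∧J_3 − K_3∧J_1 − J_1∧J_2)
        − z'(K_2∧K_3 − K_2∧J_2 − K_3∧J_3 + J_2∧J_3)`
(`K_1,K_2,K_3 = e_4,e_5,e_6`, `J_1,J_2,J_3 = e_7,e_8,e_9`). -/
def rI (z z' : ℝ) : T2 :=
  z • (wEl 4 5 + wEl 4 9 - wEl 6 7 - wEl 7 8)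
    - z' • (wEl 5 6 - wEl 5 8 - wEl 6 9 + wEl 8 9)

/-- `r_II = z K_1∧J_1`. -/
def rII (z : ℝ) : T2 := z • wEl 4 7

/-- `r_III = z(K_1∧K_2 + K_1∧J_3)`. -/
def rIII (z : ℝ) : T2 := z • (wEl 4 5 + wEl 4 9)

section

variable (Λ : ℝ)

theorem eps_swap (a b c : Fin 3) : eps b a c = -eps a b c := by
  fin_cases a <;> fin_cases b <;> fin_cases c <;> simp +decide [eps]

theorem PPbra_swap (μ ν : Fin 4) : PPbra Λ ν μ = -PPbra Λ μ ν := by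
  fin_cases μ <;> fin_cases ν <;> simp [PPbra, eps]

theorem genBra_swap (g h : Gen) : genBra Λ h g = -genBra Λ g h := by
  cases g with
  | P μ => cases h with
    | P ν => exact PPbra_swap Λ μ ν
    | _ => simp [genBra]
  | K a => cases h with
    | K b => simp only [genBra, KKbra, eps_swap a b, neg_smul, Finset.sum_neg_distrib]
    | _ => simp [genBra]
  | J a => cases h with
    | J b => simp only [genBra, JJbra, eps_swap a b, neg_smul, Finset.sum_neg_distrib]
    | _ => simp [genBra]

theorem bra_swap (x y : V) : bra Λ y x = -bra Λ x y := by
  rw [bra, bra, Finset.sum_comm, ← Finset.sum_neg_distrib]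
  refine Finset.sum_congr rfl fun i _ => ?_
  rw [← Finset.sum_neg_distrib]
  refine Finset.sum_congr rfl fun j _ => ?_
  rw [genBra_swap, smul_neg, mul_comm]

theorem bra_self (x : V) : bra Λ x x = 0 :=
  self_eq_neg.mp (bra_swap Λ x x)

theorem bra_basis (i j : Fin 10) : bra Λ (e i) (e j) = genBra Λ (idxGen i) (idxGen j) := by
  simp [bra, e, Pi.single_apply]

theorem bra_apply (x y : V) (p : Fin 10) :
    bra Λ x y p = ∑ i, ∑ k, x i * y k * genBra Λ (idxGen i) (idxGen k) p := by
  simp [bra, Finset.sum_apply]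

theorem bra_add_left (x x' y : V) : bra Λ (x + x') y = bra Λ x y + bra Λ x' y := by
  funext p
  simp only [Pi.add_apply, bra_apply, add_mul, Finset.sum_add_distrib]

theorem bra_sub_left (x x' y : V) : bra Λ (x - x') y = bra Λ x y - bra Λ x' y := by
  funext p
  simp only [Pi.sub_apply, bra_apply, sub_mul, Finset.sum_sub_distrib]

theorem bra_add_right (x y y' : V) : bra Λ x (y + y') = bra Λ x y + bra Λ x y' := by
  rw [bra_swap, bra_add_left, bra_swap Λ y, bra_swap Λ y', neg_add]

theorem bra_sub_right (x y y' : V) : bra Λ x (y - y') = bra Λ x y - bra Λ x y' := by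
  rw [bra_swap, bra_sub_left, bra_swap Λ y, bra_swap Λ y', neg_sub_neg, neg_sub]

theorem bra_Kv_Kv (a b : Fin 3) : bra Λ (Kv a) (Kv b) = KKbra a b := by
  rw [Kv, Kv, bra_basis]
  fin_cases a <;> fin_cases b <;> rfl

theorem bra_Kv_Jv (a b : Fin 3) : bra Λ (Kv a) (Jv b) = -JKbra b a := by
  rw [Kv, Jv, bra_basis]
  fin_cases a <;> fin_cases b <;> rfl

theorem bra_Jv_Kv (a b : Fin 3) : bra Λ (Jv a) (Kv b) = JKbra a b := by
  rw [Kv, Jv, bra_basis]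
  fin_cases a <;> fin_cases b <;> rfl

theorem bra_Jv_Jv (a b : Fin 3) : bra Λ (Jv a) (Jv b) = JJbra a b := by
  rw [Jv, Jv, bra_basis]
  fin_cases a <;> fin_cases b <;> rfl

def nullRot₁ : V := Kv 1 + Jv 2
def nullRot₂ : V := Kv 2 - Jv 1

theorem bra_K₁_J₁ : bra Λ (Kv 0) (Jv 0) = 0 := by
  simp [bra_Kv_Jv, JKbra, eps]

theorem bra_K₁_nullRot₁ : bra Λ (Kv 0) nullRot₁ = -nullRot₁ := by
  simp [nullRot₁, bra_add_right, bra_Kv_Kv, bra_Kv_Jv, KKbra, JKbra, eps]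

theorem bra_K₁_nullRot₂ : bra Λ (Kv 0) nullRot₂ = -nullRot₂ := by
  simp [nullRot₂, bra_sub_right, bra_Kv_Kv, bra_Kv_Jv, KKbra, JKbra, eps]

theorem bra_J₁_nullRot₁ : bra Λ (Jv 0) nullRot₁ = nullRot₂ := by
  simp [nullRot₁, nullRot₂, bra_add_right, bra_Jv_Kv, bra_Jv_Jv, JJbra, JKbra, eps]
  abel

theorem bra_J₁_nullRot₂ : bra Λ (Jv 0) nullRot₂ = -nullRot₁ := by
  simp [nullRot₁, nullRot₂, bra_sub_right, bra_Jv_Kv, bra_Jv_Jv, JJbra, JKbra, eps]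
  abel

theorem bra_nullRot₁_nullRot₂ : bra Λ nullRot₁ nullRot₂ = 0 := by
  simp [nullRot₁, nullRot₂, bra_add_left, bra_sub_right, bra_Kv_Kv, bra_Kv_Jv, bra_Jv_Kv, bra_Jv_Jv,
    KKbra, JJbra, JKbra, eps]

def schoutenForm (r r' : T2) : T3 := fun p q s =>
  ∑ i, ∑ k, (r i q * r' k s * bra Λ (e i) (e k) p + r p i * r' k s * bra Λ (e i) (e k) q
    + r p i * r' q k * bra Λ (e i) (e k) s)

def schoutenBilin : T2 →ₗ[ℝ] T2 →ₗ[ℝ] T3 :=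
  LinearMap.mk₂ ℝ (schoutenForm Λ)
    (fun r₁ r₂ r' => by
      funext p q s
      simp only [schoutenForm, Pi.add_apply, ← Finset.sum_add_distrib]
      exact Finset.sum_congr rfl fun i _ => Finset.sum_congr rfl fun k _ => by ring)
    (fun c r r' => by
      funext p q s
      simp only [schoutenForm, Pi.smul_apply, smul_eq_mul, Finset.mul_sum]
      exact Finset.sum_congr rfl fun i _ => Finset.sum_congr rfl fun k _ => by ring)
    (fun r r'₁ r'₂ => by
      funext p q s
      simp only [schoutenForm, Pi.add_apply, ← Finset.sum_add_distrib]
      exact Finset.sum_congr rfl fun i _ => Finset.sum_congr rfl fun k _ => by ring)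
    (fun c r r' => by
      funext p q s
      simp only [schoutenForm, Pi.smul_apply, smul_eq_mul, Finset.mul_sum]
      exact Finset.sum_congr rfl fun i _ => Finset.sum_congr rfl fun k _ => by ring)

theorem schouten_eq_schoutenBilin (r : T2) : schouten Λ r = schoutenBilin Λ r r := by
  funext p q s
  simp only [schoutenBilin, LinearMap.mk₂_apply, schoutenForm, schouten, mul_ite, mul_one,
    mul_zero, ite_mul, zero_mul, mul_add, Finset.sum_add_distrib, Finset.sum_ite_irrel,
    Finset.sum_const_zero, Finset.sum_ite_eq', Finset.mem_univ, if_true, one_mul]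

def tensorInsert (x y w : V) : T3 := fun p q s =>
  x p * y q * w s - y p * x q * w s + y p * w q * x s

@[simp] theorem tensorInsert_zero_left (y w : V) : tensorInsert 0 y w = 0 := by
  funext p q s
  simp [tensorInsert]

theorem schoutenBilin_wedge_wedge (a b c d : V) :
    schoutenBilin Λ (wedge a b) (wedge c d) =
      tensorInsert (bra Λ a c) b d - tensorInsert (bra Λ a d) b c
        - tensorInsert (bra Λ b c) a d + tensorInsert (bra Λ b d) a c := by
  funext p q s
  simp only [schoutenBilin, LinearMap.mk₂_apply, schoutenForm, bra_basis]
  simp only [wedge, tensorInsert, bra_apply,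
    Pi.add_apply, Pi.sub_apply, Finset.mul_sum, Finset.sum_mul, ← Finset.sum_add_distrib,
    ← Finset.sum_sub_distrib]
  exact Finset.sum_congr rfl fun i _ => Finset.sum_congr rfl fun k _ => by ring

theorem rI_eq_wedges (z z' : ℝ) : rI z z' =
    z • (wedge (Kv 0) nullRot₁ + wedge (Jv 0) nullRot₂) - z' • wedge nullRot₁ nullRot₂ := by
  funext i j
  simp only [rI, wEl, wedge, nullRot₁, nullRot₂, Kv, Jv, Pi.add_apply, Pi.sub_apply, Pi.smul_apply,
    smul_eq_mul, Fin.isValue, Fin.val_zero, Fin.val_one, Fin.val_two, Fin.reduceFinMk, zero_add,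
    Nat.reduceAdd]
  ring

theorem rII_eq_wedge (z : ℝ) : rII z = z • wedge (Kv 0) (Jv 0) := rfl

theorem rIII_eq_wedge (z : ℝ) : rIII z = z • wedge (Kv 0) nullRot₁ := by
  funext i j
  simp only [rIII, wEl, wedge, nullRot₁, Kv, Jv, Pi.add_apply, Pi.smul_apply, smul_eq_mul,
    Fin.isValue, Fin.val_zero, Fin.val_one, Fin.val_two, Fin.reduceFinMk, zero_add, Nat.reduceAdd]
  ring

theorem schouten_rII_eq_zero (z : ℝ) : schouten Λ (rII z) = 0 := by
  rw [rII_eq_wedge, schouten_eq_schoutenBilin]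
  simp [schoutenBilin_wedge_wedge, bra_self, bra_K₁_J₁, bra_swap Λ (Kv 0) (Jv 0)]

theorem schouten_rIII_eq_zero (z : ℝ) : schouten Λ (rIII z) = 0 := by
  rw [rIII_eq_wedge, schouten_eq_schoutenBilin]
  simp only [map_smul, LinearMap.smul_apply, schoutenBilin_wedge_wedge, bra_self, bra_K₁_nullRot₁,
    bra_swap Λ (Kv 0) nullRot₁, neg_neg, tensorInsert_zero_left]
  funext p q s
  simp only [tensorInsert, Pi.smul_apply, Pi.add_apply, Pi.sub_apply, Pi.neg_apply, Pi.zero_apply,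
    smul_eq_mul]
  ring

theorem schouten_rI_eq_zero (z z' : ℝ) : schouten Λ (rI z z') = 0 := by
  rw [rI_eq_wedges, schouten_eq_schoutenBilin]
  simp only [map_smul, map_add, map_sub, LinearMap.smul_apply, LinearMap.add_apply,
    LinearMap.sub_apply, schoutenBilin_wedge_wedge, bra_self, bra_K₁_J₁, bra_K₁_nullRot₁,
    bra_K₁_nullRot₂, bra_J₁_nullRot₁, bra_J₁_nullRot₂, bra_nullRot₁_nullRot₂,
    bra_swap Λ (Kv 0) (Jv 0), bra_swap Λ (Kv 0) nullRot₁, bra_swap Λ (Kv 0) nullRot₂,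
    bra_swap Λ (Jv 0) nullRot₁, bra_swap Λ (Jv 0) nullRot₂,
    bra_swap Λ nullRot₁ nullRot₂, neg_neg, neg_zero, tensorInsert_zero_left]
  funext p q s
  simp only [tensorInsert, Pi.smul_apply, Pi.add_apply, Pi.sub_apply, Pi.neg_apply, Pi.zero_apply,
    smul_eq_mul]
  ring

end

/-- For every `Λ` and all parameters `z, z'`, the three classical
`r`-matrices `r_I`, `r_II`, `r_III` satisfy the classical Yang–Baxter equation
`[[r,r]] = 0`. -/
theorem rI_rII_rIII_satisfy_CYBE (Λ z z' : ℝ) :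
    schouten Λ (rI z z') = 0 ∧ schouten Λ (rII z) = 0 ∧ schouten Λ (rIII z) = 0 :=
  ⟨schouten_rI_eq_zero Λ z z', schouten_rII_eq_zero Λ z, schouten_rIII_eq_zero Λ z⟩

end
end NCST
end

section
/- Let Λ ∈ ℝ and let r ∈ g_Λ^{2+1} ∧ g_Λ^{2+1} be a skew-symmetric element of g_Λ^{2+1} ⊗ g_Λ^{2+1}. If X·r ∈ h^{2+1} ∧ h^{2+1} for every X ∈ h^{2+1} = span{K_1,K_2,J_3}, then there exist real numbers a_2, b_2, c_2, c_1 such that r = a_2 J_3∧K_1 + b_2 J_3∧K_2 + c_2 K_1∧K_2 + c_1 (J_3∧P_0 − P_1∧K_2 + P_2∧K_1). -/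
namespace NCST3

noncomputable section

/-- The underlying 6-dimensional vector space of `g_Λ^{2+1}`, with basis indices
`0,1,2 ↦ P_0,P_1,P_2`, `3 ↦ K_1`, `4 ↦ K_2`, `5 ↦ J_3`. -/
abbrev V6 : Type := Fin 6 → ℝ

/-- The `i`-th basis vector. -/
def e6 (i : Fin 6) : V6 := Pi.single i 1

/-- The bracket `[X_i, X_j]` of two basis generators of `g_Λ^{2+1}`:
`[J_3,P_1]=P_2`, `[J_3,P_2]=−P_1`, `[J_3,K_1]=K_2`, `[J_3,K_2]=−K_1`, `[J_3,P_0]=0`,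
`[K_a,P_0]=P_a`, `[K_a,P_b]=δ_{ab}P_0`, `[K_1,K_2]=−J_3`,
`[P_0,P_a]=−Λ K_a`, `[P_1,P_2]=Λ J_3`. -/
def braB6 (Λ : ℝ) : Fin 6 → Fin 6 → V6 :=
  ![![0, (-Λ) • e6 3, (-Λ) • e6 4, -e6 1, -e6 2, 0],
    ![Λ • e6 3, 0, Λ • e6 5, -e6 0, 0, -e6 2],
    ![Λ • e6 4, (-Λ) • e6 5, 0, 0, -e6 0, e6 1],
    ![e6 1, e6 0, 0, 0, -e6 5, -e6 4],
    ![e6 2, 0, e6 0, e6 5, 0, e6 3],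
    ![0, e6 2, -e6 1, e6 4, -e6 3, 0]]

/-- The bracket of `g_Λ^{2+1}`, extended bilinearly from the structure constants. -/
def bra6 (Λ : ℝ) (x y : V6) : V6 :=
  ∑ i : Fin 6, ∑ j : Fin 6, (x i * y j) • braB6 Λ i j

/-- Coefficients of elements of `g_Λ^{2+1} ⊗ g_Λ^{2+1}`. -/
abbrev T2₆ : Type := Fin 6 → Fin 6 → ℝ
/-- Coefficients of elements of the triple tensor power of `g_Λ^{2+1}`. -/
abbrev T3₆ : Type := Fin 6 → Fin 6 → Fin 6 → ℝ

/-- The diagonal adjoint action `X·(a⊗b) = [X,a]⊗b + a⊗[X,b]`, in coordinates. -/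
def adT6 (Λ : ℝ) (X : V6) (r : T2₆) : T2₆ :=
  fun k l => (∑ i : Fin 6, r i l * bra6 Λ X (e6 i) k) +
    ∑ j : Fin 6, r k j * bra6 Λ X (e6 j) l

/-- `x ∧ y := x ⊗ y - y ⊗ x`, in coordinates. -/
def wedge6 (x y : V6) : T2₆ := fun i j => x i * y j - x j * y i

/-- The wedge `e_i ∧ e_j` of two basis vectors. -/
def wEl6 (i j : Fin 6) : T2₆ := wedge6 (e6 i) (e6 j)

/-- The Schouten bracket `[[r,r]]`, in coordinates: for `r = Σ aᵢ⊗bᵢ`,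
`[[r,r]] = Σᵢⱼ ([aᵢ,aⱼ]⊗bᵢ⊗bⱼ + aᵢ⊗[bᵢ,aⱼ]⊗bⱼ + aᵢ⊗aⱼ⊗[bᵢ,bⱼ])`. -/
def schouten6 (Λ : ℝ) (r : T2₆) : T3₆ :=
  fun p q s =>
    ∑ i : Fin 6, ∑ j : Fin 6, ∑ k : Fin 6, ∑ l : Fin 6, r i j * r k l *
      (bra6 Λ (e6 i) (e6 k) p * (if j = q then (1:ℝ) else 0) * (if l = s then (1:ℝ) else 0)
      + (if i = p then (1:ℝ) else 0) * bra6 Λ (e6 j) (e6 k) q * (if l = s then (1:ℝ) else 0)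
      + (if i = p then (1:ℝ) else 0) * (if k = q then (1:ℝ) else 0) * bra6 Λ (e6 j) (e6 l) s)

/-- The diagonal adjoint action of `X` on the triple tensor power, in coordinates. -/
def adT36 (Λ : ℝ) (X : V6) (T : T3₆) : T3₆ :=
  fun p q s => (∑ i : Fin 6, T i q s * bra6 Λ X (e6 i) p)
    + (∑ j : Fin 6, T p j s * bra6 Λ X (e6 j) q)
    + ∑ k : Fin 6, T p q k * bra6 Λ X (e6 k) s

/-- The special (2+1)D element `J_3∧P_0 − P_1∧K_2 + P_2∧K_1`
(`J_3 = e_5`, `P_0 = e_0`, `P_1 = e_1`, `P_2 = e_2`, `K_1 = e_3`, `K_2 = e_4`). -/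
def rSpec : T2₆ := wEl6 5 0 - wEl6 1 4 + wEl6 2 3

/-!
The subalgebra `h = span{K₁, K₂, J₃}` is a copy of `so(2,1)`, and `t = span{P₀, P₁, P₂}` is its
vector representation. Splitting `g ∧ g = (h ∧ h) ⊕ (h ⊗ t) ⊕ (t ∧ t)` as `h`-modules, the
hypothesis says that the components of `r` in `h ⊗ t ≅ t ⊗ t` and `t ∧ t ≅ t` are `h`-invariant.
The vector representation has no invariants and `t ⊗ t` only the Minkowski metric, whose image
in `h ∧ t` is `rSpec`. Brackets with elements of `h` do not involve `Λ`.
-/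

lemma bra6_e6_e6 (Λ : ℝ) (a b : Fin 6) : bra6 Λ (e6 a) (e6 b) = braB6 Λ a b := by
  simp [bra6, e6, Pi.single_apply, ite_smul, Finset.sum_ite_eq']

lemma adT6_e6_apply (Λ : ℝ) (x : Fin 6) (r : T2₆) (k l : Fin 6) :
    adT6 Λ (e6 x) r k l = (∑ i, r i l * braB6 Λ x i k) + ∑ j, r k j * braB6 Λ x j l := by
  simp [adT6, bra6_e6_e6]

lemma translation_translation_coeffs_eq_zero {Λ : ℝ} {r : T2₆}
    (h : ∀ X : V6, (X 0 = 0 ∧ X 1 = 0 ∧ X 2 = 0) → ∀ k l : Fin 6, k.1 < 3 → adT6 Λ X r k l = 0) :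
    r 0 1 = 0 ∧ r 0 2 = 0 ∧ r 1 2 = 0 := by
  have h01 := h (e6 4) (by simp [e6]) 2 1 (by decide)
  have h02 := h (e6 3) (by simp [e6]) 1 2 (by decide)
  have h12 := h (e6 3) (by simp [e6]) 0 2 (by decide)
  rw [adT6_e6_apply] at h01 h02 h12
  simp [Fin.sum_univ_six, braB6, e6] at h01 h02 h12
  exact ⟨h01, h02, h12⟩

lemma translation_lorentz_coeffs {Λ : ℝ} {r : T2₆}
    (h : ∀ X : V6, (X 0 = 0 ∧ X 1 = 0 ∧ X 2 = 0) → ∀ k l : Fin 6, k.1 < 3 → adT6 Λ X r k l = 0) :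
    r 0 3 = 0 ∧ r 0 4 = 0 ∧ r 1 3 = 0 ∧ r 1 5 = 0 ∧ r 2 4 = 0 ∧ r 2 5 = 0 ∧
      r 1 4 = r 0 5 ∧ r 2 3 = -r 0 5 := by
  have h03 := h (e6 3) (by simp [e6]) 1 3 (by decide)
  have h04 := h (e6 5) (by simp [e6]) 0 3 (by decide)
  have h13 := h (e6 3) (by simp [e6]) 0 3 (by decide)
  have h15 := h (e6 5) (by simp [e6]) 2 5 (by decide)
  have h24 := h (e6 3) (by simp [e6]) 2 5 (by decide)
  have h25 := h (e6 5) (by simp [e6]) 1 5 (by decide)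
  have h14 := h (e6 3) (by simp [e6]) 0 4 (by decide)
  have h23 := h (e6 4) (by simp [e6]) 0 3 (by decide)
  rw [adT6_e6_apply] at h03 h04 h13 h15 h24 h25 h14 h23
  simp [Fin.sum_univ_six, braB6, e6] at h03 h04 h13 h15 h24 h25 h14 h23
  exact ⟨h03, h04, h13, h15, h24, h25, by linarith, by linarith⟩

lemma eq_combination_of_translation_coeffs {r : T2₆} (hskew : ∀ i j : Fin 6, r j i = -r i j)
    (htt : r 0 1 = 0 ∧ r 0 2 = 0 ∧ r 1 2 = 0)
    (htl : r 0 3 = 0 ∧ r 0 4 = 0 ∧ r 1 3 = 0 ∧ r 1 5 = 0 ∧ r 2 4 = 0 ∧ r 2 5 = 0 ∧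
      r 1 4 = r 0 5 ∧ r 2 3 = -r 0 5) :
    r = r 5 3 • wEl6 5 3 + r 5 4 • wEl6 5 4 + r 3 4 • wEl6 3 4 + r 5 0 • rSpec := by
  obtain ⟨h01, h02, h12⟩ := htt
  obtain ⟨h03, h04, h13, h15, h24, h25, h14, h23⟩ := htl
  have hdiag : ∀ i, r i i = 0 := fun i => by linarith [hskew i i]
  funext k l
  fin_cases k <;> fin_cases l <;> simp [wEl6, wedge6, rSpec, e6, hdiag] <;>
    linarith [hskew 0 1, hskew 0 2, hskew 0 3, hskew 0 4, hskew 1 2, hskew 1 3, hskew 1 4,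
      hskew 0 5, hskew 1 5, hskew 2 3, hskew 2 4, hskew 2 5, hskew 3 4, hskew 3 5, hskew 4 5]

/-- If a skew tensor `r ∈ g_Λ^{2+1} ∧ g_Λ^{2+1}` satisfies
`X·r ∈ h^{2+1} ∧ h^{2+1}` for every `X ∈ h^{2+1} = span{K_1,K_2,J_3}` (coordinates
`3,4,5`), then `r = a₂ J_3∧K_1 + b₂ J_3∧K_2 + c₂ K_1∧K_2 + c₁(J_3∧P_0 − P_1∧K_2 + P_2∧K_1)`
for some reals `a₂, b₂, c₂, c₁`. -/
theorem lorentz21_subbialgebra_classification (Λ : ℝ) (r : T2₆)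
    (hskew : ∀ i j : Fin 6, r j i = -r i j)
    (h : ∀ X : V6, (X 0 = 0 ∧ X 1 = 0 ∧ X 2 = 0) →
      ∀ k l : Fin 6, (k.1 < 3 ∨ l.1 < 3) → adT6 Λ X r k l = 0) :
    ∃ a₂ b₂ c₂ c₁ : ℝ,
      r = a₂ • wEl6 5 3 + b₂ • wEl6 5 4 + c₂ • wEl6 3 4 + c₁ • rSpec := by
  have h' : ∀ X : V6, (X 0 = 0 ∧ X 1 = 0 ∧ X 2 = 0) → ∀ k l : Fin 6, k.1 < 3 →
      adT6 Λ X r k l = 0 := fun X hX k l hk => h X hX k l (Or.inl hk)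
  exact ⟨_, _, _, _, eq_combination_of_translation_coeffs hskew
    (translation_translation_coeffs_eq_zero h') (translation_lorentz_coeffs h')⟩

end
end NCST3
end

section
/- Let A be an associative unital ℝ-algebra, z ∈ ℝ, and let x⁻, x⁺, y, w ∈ A satisfy the Type III noncommutative spacetime relations: [y,x⁺] = z(x⁺)², [y,x⁻] = −z x⁻x⁺, [x⁻,x⁺] = 2z x⁺y, and w commutes with each of x⁻, x⁺, y, where [a,b] := ab − ba. Then the quantum Casimir element Ĉ = x⁻x⁺ − y² commutes with each of x⁻, x⁺, y, w (is central in the subalgebra generated by these elements). -/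
/-!
By the Leibniz rule for commutators, `[Ĉ, y] = [x⁻x⁺, y]`, `[Ĉ, x⁻] = -z [x⁻x⁺, y]` and
`[Ĉ, x⁺] = z [x⁺, [y, x⁺]]`. The first two vanish because `x⁻x⁺` commutes with `y`
(the two terms of `[x⁻x⁺, y]` are `∓ z x⁻(x⁺)²`), the last because `[y, x⁺] = z (x⁺)²`
commutes with `x⁺`. An element commuting with all generators commutes with `Ĉ`.
-/

namespace Ring

variable {A : Type*} [Ring A]

theorem sub_lie (a b c : A) : ⁅a - b, c⁆ = ⁅a, c⁆ - ⁅b, c⁆ := by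
  simp only [lie_def]; noncomm_ring

theorem mul_lie (a b c : A) : ⁅a * b, c⁆ = a * ⁅b, c⁆ + ⁅a, c⁆ * b := by
  simp only [lie_def]; noncomm_ring

theorem sq_lie (a c : A) : ⁅a ^ 2, c⁆ = a * ⁅a, c⁆ + ⁅a, c⁆ * a := by
  rw [sq, mul_lie]

theorem lie_skew (a b : A) : ⁅a, b⁆ = -⁅b, a⁆ :=
  (neg_sub _ _).symm

theorem lie_self (a : A) : ⁅a, a⁆ = 0 :=
  sub_self _

end Ring

section TypeIII

variable {R A : Type*} [CommRing R] [Ring A] [Algebra R A]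

structure IsTypeIIIRelations (z : R) (xm xp y : A) : Prop where
  lie_y_xp : ⁅y, xp⁆ = z • xp ^ 2
  lie_y_xm : ⁅y, xm⁆ = -(z • (xm * xp))
  lie_xm_xp : ⁅xm, xp⁆ = (2 * z) • (xp * y)

def typeIIICasimir (xm xp y : A) : A := xm * xp - y ^ 2

namespace IsTypeIIIRelations

variable {z : R} {xm xp y : A}

theorem lie_xm_mul_xp_y (h : IsTypeIIIRelations z xm xp y) : ⁅xm * xp, y⁆ = 0 := by
  rw [Ring.mul_lie, Ring.lie_skew xp, Ring.lie_skew xm, h.lie_y_xp, h.lie_y_xm]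
  simp only [sq, mul_neg, neg_neg, mul_smul_comm, smul_mul_assoc, mul_assoc, neg_add_cancel]

theorem lie_casimir_y (h : IsTypeIIIRelations z xm xp y) : ⁅typeIIICasimir xm xp y, y⁆ = 0 := by
  rw [typeIIICasimir, Ring.sub_lie, Ring.sq_lie, Ring.lie_self, h.lie_xm_mul_xp_y]
  simp

theorem lie_casimir_xm (h : IsTypeIIIRelations z xm xp y) : ⁅typeIIICasimir xm xp y, xm⁆ = 0 :=
  calc ⁅typeIIICasimir xm xp y, xm⁆
      = xm * ⁅xp, xm⁆ - (y * ⁅y, xm⁆ + ⁅y, xm⁆ * y) := by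
        rw [typeIIICasimir, Ring.sub_lie, Ring.mul_lie, Ring.lie_self, zero_mul, add_zero,
          Ring.sq_lie]
    _ = -(z • ⁅xm * xp, y⁆) := by
        conv_lhs => rw [Ring.lie_skew xp, h.lie_xm_xp, h.lie_y_xm]
        simp only [Ring.lie_def, mul_neg, neg_mul, mul_smul_comm, smul_mul_assoc, mul_assoc]
        module
    _ = 0 := by rw [h.lie_xm_mul_xp_y, smul_zero, neg_zero]

theorem lie_casimir_xp (h : IsTypeIIIRelations z xm xp y) : ⁅typeIIICasimir xm xp y, xp⁆ = 0 :=
  calc ⁅typeIIICasimir xm xp y, xp⁆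
      = ⁅xm, xp⁆ * xp - (y * ⁅y, xp⁆ + ⁅y, xp⁆ * y) := by
        rw [typeIIICasimir, Ring.sub_lie, Ring.mul_lie, Ring.lie_self, mul_zero, zero_add,
          Ring.sq_lie]
    _ = z • (xp * ⁅y, xp⁆ - ⁅y, xp⁆ * xp) := by
        conv_lhs => rw [h.lie_xm_xp, h.lie_y_xp]
        simp only [Ring.lie_def, sq, mul_sub, sub_mul, mul_smul_comm, smul_mul_assoc, mul_assoc]
        module
    _ = 0 := by
        rw [h.lie_y_xp, mul_smul_comm, smul_mul_assoc, (Commute.self_pow xp 2).eq, sub_self,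
          smul_zero]

end IsTypeIIIRelations

end TypeIII

/-- In an associative unital ℝ-algebra `A`, if `x⁻, x⁺, y, w`
satisfy the Type III noncommutative spacetime relations
`[y,x⁺] = z(x⁺)²`, `[y,x⁻] = −z x⁻x⁺`, `[x⁻,x⁺] = 2z x⁺y`, and `w` commutes with
`x⁻, x⁺, y`, then the quantum Casimir `Ĉ = x⁻x⁺ − y²` commutes with each of
`x⁻, x⁺, y, w`. -/
theorem typeIII_quantum_casimir_central {A : Type*} [Ring A] [Algebra ℝ A]
    (z : ℝ) (xm xp y w : A)
    (h1 : y * xp - xp * y = z • xp ^ 2)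
    (h2 : y * xm - xm * y = -(z • (xm * xp)))
    (h3 : xm * xp - xp * xm = (2 * z) • (xp * y))
    (h4 : w * xm = xm * w) (h5 : w * xp = xp * w) (h6 : w * y = y * w) :
    Commute (xm * xp - y ^ 2) xm ∧
    Commute (xm * xp - y ^ 2) xp ∧
    Commute (xm * xp - y ^ 2) y ∧
    Commute (xm * xp - y ^ 2) w := by
  have h : IsTypeIIIRelations z xm xp y := ⟨h1, h2, h3⟩
  have hw : Commute w (xm * xp - y ^ 2) :=
    ((show Commute w xm from h4).mul_right h5).sub_right ((show Commute w y from h6).pow_right 2)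
  exact ⟨commute_iff_lie_eq.2 h.lie_casimir_xm, commute_iff_lie_eq.2 h.lie_casimir_xp,
    commute_iff_lie_eq.2 h.lie_casimir_y, hw.symm⟩
end

section
/- Let A be an associative unital ℝ-algebra, z ∈ ℝ, and let t, u, y, w ∈ A satisfy: t commutes with u, y and w; [u,y] = z t w; [u,w] = −z t y; [y,w] = 0, where [a,b] := ab − ba. Then the element y² + w² commutes with each of t, u, y, w. (This covers both the Type II noncommutative Galilei spacetime, with t = x̂⁰ the central quantum time coordinate and u = x̂¹, y = x̂², w = x̂³, and the Type II noncommutative Carroll spacetime, with t = x̂¹ the central quantum space coordinate and u = x̂⁰, y = x̂², w = x̂³.) -/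
/-! Commutation with `u` acts on `y² + w²` as a derivation, giving
`[u, y² + w²] = a(wy + yw) - a(yw + wy) = 0` with `a = z t`; the remaining three
commutations only use that `t`, `y`, `w` pairwise commute. -/

theorem commute_sq_add_sq_of_commutator_eq {R : Type*} [Ring R] {a u y w : R}
    (hay : Commute a y) (haw : Commute a w)
    (hy : u * y - y * u = a * w) (hw : u * w - w * u = -(a * y)) :
    Commute (y ^ 2 + w ^ 2) u := by
  have hderiv : u * (y ^ 2 + w ^ 2) - (y ^ 2 + w ^ 2) * u =
      (u * y - y * u) * y + y * (u * y - y * u) +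
        ((u * w - w * u) * w + w * (u * w - w * u)) := by
    noncomm_ring
  have hzero : u * (y ^ 2 + w ^ 2) - (y ^ 2 + w ^ 2) * u = 0 := by
    rw [hderiv, hy, hw, mul_neg, ← mul_assoc y, ← mul_assoc w, ← hay.eq, ← haw.eq]
    noncomm_ring
  exact (sub_eq_zero.mp hzero).symm

theorem typeII_galilei_carroll_casimir_central_general {A : Type*} [Ring A] [Algebra ℝ A]
    (z : ℝ) (t u y w : A)
    (ht2 : t * y = y * t) (ht3 : t * w = w * t)
    (h1 : u * y - y * u = z • (t * w))
    (h2 : u * w - w * u = -(z • (t * y)))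
    (h3 : y * w = w * y) :
    Commute (y ^ 2 + w ^ 2) t ∧
    Commute (y ^ 2 + w ^ 2) u ∧
    Commute (y ^ 2 + w ^ 2) y ∧
    Commute (y ^ 2 + w ^ 2) w := by
  have hty : Commute t y := ht2
  have htw : Commute t w := ht3
  have hyw : Commute y w := h3
  refine ⟨(hty.symm.pow_left 2).add_left (htw.symm.pow_left 2), ?_,
    ((Commute.refl y).pow_left 2).add_left (hyw.symm.pow_left 2),
    (hyw.pow_left 2).add_left ((Commute.refl w).pow_left 2)⟩
  rw [← smul_mul_assoc] at h1 h2
  exact commute_sq_add_sq_of_commutator_eq (hty.smul_left z) (htw.smul_left z) h1 h2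

/-- In an associative unital ℝ-algebra `A`, if `t` commutes with
`u, y, w`, `[u,y] = z t w`, `[u,w] = −z t y` and `[y,w] = 0`, then `y² + w²`
commutes with each of `t, u, y, w`. (Type II noncommutative Galilei spacetime:
`t = x̂⁰`, `u = x̂¹`, `y = x̂²`, `w = x̂³`; Type II noncommutative Carroll spacetime:
`t = x̂¹`, `u = x̂⁰`, `y = x̂²`, `w = x̂³`.) -/
theorem typeII_galilei_carroll_casimir_central {A : Type*} [Ring A] [Algebra ℝ A]
    (z : ℝ) (t u y w : A)
    (ht1 : t * u = u * t) (ht2 : t * y = y * t) (ht3 : t * w = w * t)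
    (h1 : u * y - y * u = z • (t * w))
    (h2 : u * w - w * u = -(z • (t * y)))
    (h3 : y * w = w * y) :
    Commute (y ^ 2 + w ^ 2) t ∧
    Commute (y ^ 2 + w ^ 2) u ∧
    Commute (y ^ 2 + w ^ 2) y ∧
    Commute (y ^ 2 + w ^ 2) w :=
  typeII_galilei_carroll_casimir_central_general z t u y w ht2 ht3 h1 h2 h3
end
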